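/- arXiv:1105.2803 — 2 statements merged into one kernel-verified Lean document; each statement's English description precedes it below -/
import Mathlib

section
/- Let r, s be real with 0 < s, 2s < r, and r + 5s/3 < 1, and suppose 1/2 + s ≤ r. Then the point (0, r − s) lies in the closed region D2 = {(y₁, y₂) : 0 ≤ y₁ ≤ s, r − s + y₁ ≤ y₂ ≤ r}, the point (1 − r + s, 1 − r + s) lies in the closed region D1 = {(y₁, y₂) : 0 ≤ y₁ ≤ y₂ ≤ r − s}, the point (r − s, 1) lies in the closed region D11 = {(y₁, y₂) : s ≤ y₁ ≤ r − 3(1 − y₂)/4, 1 − 4s/3 ≤ y₂ ≤ 1}, and F₂(0, r − s) = (1 − r + s, 1 − r + s), F₁(1 − r + s, 1 − r + s) = (r − s, 1), F₁₁(r − s, 1) = (0, r − s). Thus these three points form a period-3 orbit on the boundary of the simplex with symbolic code 2 → 1 → 11. -/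
/-- The affine branch of the return-time map on region 2. -/
noncomputable def F2 (r s : ℝ) (p : ℝ × ℝ) : ℝ × ℝ :=
  (1 - (5*p.2 - p.1)/3 + 2*(r - s)/3, 1 - (5*p.2 - 4*p.1)/3 + 2*(r - s)/3)

/-- The affine branch of the return-time map on region 1. -/
noncomputable def F1 (p : ℝ × ℝ) : ℝ × ℝ :=
  (1 - p.2, 1 - p.2 + p.1)

/-- The affine branch of the return-time map on region 11. -/
noncomputable def F11 (p : ℝ × ℝ) : ℝ × ℝ :=
  (3*(1 - p.2)/4, p.1 + 3*(1 - p.2)/4)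

/-- The closed region D2. -/
def D2 (r s : ℝ) : Set (ℝ × ℝ) :=
  {p | 0 ≤ p.1 ∧ p.1 ≤ s ∧ r - s + p.1 ≤ p.2 ∧ p.2 ≤ r}

/-- The closed region D1. -/
def D1 (r s : ℝ) : Set (ℝ × ℝ) :=
  {p | 0 ≤ p.1 ∧ p.1 ≤ p.2 ∧ p.2 ≤ r - s}

/-- The closed region D11. -/
def D11 (r s : ℝ) : Set (ℝ × ℝ) :=
  {p | s ≤ p.1 ∧ p.1 ≤ r - 3*(1 - p.2)/4 ∧ 1 - 4*s/3 ≤ p.2 ∧ p.2 ≤ 1}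

/-! The three branches carry three edges of the simplex cyclically onto each other:
`F₂` maps the edge `x₁ = 0` onto the diagonal, `F₁` maps the diagonal onto the edge `x₂ = 1`,
and `F₁₁` maps that edge back onto `x₁ = 0`; following `(0, r - s)` around this cycle returns
to it. -/

theorem F2_mk_zero (r s y : ℝ) :
    F2 r s (0, y) = (1 - 5 * y / 3 + 2 * (r - s) / 3, 1 - 5 * y / 3 + 2 * (r - s) / 3) := by
  simp only [F2, Prod.mk.injEq]
  constructor <;> ring

theorem F1_mk_self (t : ℝ) : F1 (t, t) = (1 - t, 1) := by
  simp only [F1, sub_add_cancel]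

theorem F11_mk_one (x : ℝ) : F11 (x, 1) = (0, x) := by
  simp only [F11, sub_self, mul_zero, zero_div, add_zero]

theorem mk_zero_sub_mem_D2 {r s : ℝ} (hs : 0 ≤ s) : ((0 : ℝ), r - s) ∈ D2 r s :=
  ⟨le_rfl, hs, by linarith, by linarith⟩

theorem mk_self_mem_D1_iff {r s t : ℝ} : (t, t) ∈ D1 r s ↔ 0 ≤ t ∧ t ≤ r - s := by
  simp only [D1, Set.mem_ofPred_eq, le_refl, true_and]

theorem mk_one_mem_D11_iff {r s x : ℝ} : (x, (1 : ℝ)) ∈ D11 r s ↔ s ≤ x ∧ x ≤ r ∧ 0 ≤ s := by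
  simp only [D11, Set.mem_ofPred_eq, sub_self, mul_zero, zero_div, sub_zero, le_refl, and_true,
    sub_le_self_iff]
  constructor
  · rintro ⟨hsx, hxr, hs⟩
    exact ⟨hsx, hxr, by linarith⟩
  · rintro ⟨hsx, hxr, hs⟩
    exact ⟨hsx, hxr, by positivity⟩

theorem boundary_period3_orbit_2_1_11_general (r s : ℝ)
    (hs : 0 < s) (h1 : r + 5*s/3 < 1) (hlo : 1/2 + s ≤ r) :
    ((0 : ℝ), r - s) ∈ D2 r s ∧
    (1 - r + s, 1 - r + s) ∈ D1 r s ∧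
    (r - s, (1 : ℝ)) ∈ D11 r s ∧
    F2 r s (0, r - s) = (1 - r + s, 1 - r + s) ∧
    F1 (1 - r + s, 1 - r + s) = (r - s, 1) ∧
    F11 (r - s, 1) = (0, r - s) := by
  refine ⟨mk_zero_sub_mem_D2 hs.le, mk_self_mem_D1_iff.2 ⟨by linarith, by linarith⟩,
    mk_one_mem_D11_iff.2 ⟨by linarith, by linarith, hs.le⟩, ?_, ?_, F11_mk_one _⟩
  · rw [F2_mk_zero]
    congr 1 <;> ring
  · rw [F1_mk_self]
    congr 1
    ring

theorem boundary_period3_orbit_2_1_11 (r s : ℝ)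
    (hs : 0 < s) (hrs : 2*s < r) (h1 : r + 5*s/3 < 1) (hlo : 1/2 + s ≤ r) :
    ((0 : ℝ), r - s) ∈ D2 r s ∧
    (1 - r + s, 1 - r + s) ∈ D1 r s ∧
    (r - s, (1 : ℝ)) ∈ D11 r s ∧
    F2 r s (0, r - s) = (1 - r + s, 1 - r + s) ∧
    F1 (1 - r + s, 1 - r + s) = (r - s, 1) ∧
    F11 (r - s, 1) = (0, r - s) :=
  boundary_period3_orbit_2_1_11_general r s hs h1 hlo
end

section
/- Let r, s be real with 0 < s, 2s < r, and r + 5s/3 < 1, and suppose r ≤ 1/2 + s/12. Then the point (0, r − s/2) lies in the closed region D2 = {(y₁, y₂) : 0 ≤ y₁ ≤ s, r − s + y₁ ≤ y₂ ≤ r}, the point (1 − r + s/6, 1 − r + s/6) lies in the closed region D8 = {(y₁, y₂) : r ≤ y₁ ≤ y₂ ≤ 1 − 4s/3}, the point (r − s/2, 1) lies in the closed region D11 = {(y₁, y₂) : s ≤ y₁ ≤ r − 3(1 − y₂)/4, 1 − 4s/3 ≤ y₂ ≤ 1}, and F₂(0, r − s/2) = (1 − r + s/6, 1 − r + s/6),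 F₈(1 − r + s/6, 1 − r + s/6) = (r − s/2, 1), F₁₁(r − s/2, 1) = (0, r − s/2). Thus these three points form a period-3 orbit with symbolic code 2 → 8 → 11. -/
/-- The affine branch of the return-time map on region 8. -/
noncomputable def F8 (s : ℝ) (p : ℝ × ℝ) : ℝ × ℝ :=
  (1 - p.2 - s/3, 1 - p.2 + p.1)

/-- The closed region D8. -/
def D8 (r s : ℝ) : Set (ℝ × ℝ) :=
  {p | r ≤ p.1 ∧ p.1 ≤ p.2 ∧ p.2 ≤ 1 - 4*s/3}

/-! On the line `x₁ = 0` the composite `F11 ∘ F8 ∘ F2` acts as `y ↦ 5y/3 − (2r − s)/3`, whose fixed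
point is `r − s/2`; the three orbit points then lie in their regions exactly when
`3s/2 ≤ r ≤ 1/2 + s/12` (and `0 ≤ s`). -/

theorem F2_zero_sub_half (r s : ℝ) : F2 r s (0, r - s/2) = (1 - r + s/6, 1 - r + s/6) := by
  simp only [F2, Prod.mk.injEq]
  constructor <;> ring

theorem F8_diag (s a : ℝ) : F8 s (a, a) = (1 - a - s/3, 1) := by
  simp [F8]

theorem F11_snd_one (b : ℝ) : F11 (b, 1) = (0, b) := by
  norm_num [F11]

theorem zero_sub_half_mem_D2 {r s : ℝ} (hs : 0 ≤ s) : ((0 : ℝ), r - s/2) ∈ D2 r s :=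
  ⟨le_rfl, hs, by linarith, by linarith⟩

theorem diag_mem_D8 {r s : ℝ} (hr : 3*s/2 ≤ r) (hhi : r ≤ 1/2 + s/12) :
    (1 - r + s/6, 1 - r + s/6) ∈ D8 r s :=
  ⟨by linarith, le_rfl, by linarith⟩

theorem sub_half_one_mem_D11 {r s : ℝ} (hs : 0 ≤ s) (hr : 3*s/2 ≤ r) :
    (r - s/2, (1 : ℝ)) ∈ D11 r s :=
  ⟨by linarith, by linarith, by linarith, le_rfl⟩

theorem period3_orbit_2_8_11_general (r s : ℝ)
    (hs : 0 < s) (hrs : 2*s < r) (hhi : r ≤ 1/2 + s/12) :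
    ((0 : ℝ), r - s/2) ∈ D2 r s ∧
    (1 - r + s/6, 1 - r + s/6) ∈ D8 r s ∧
    (r - s/2, (1 : ℝ)) ∈ D11 r s ∧
    F2 r s (0, r - s/2) = (1 - r + s/6, 1 - r + s/6) ∧
    F8 s (1 - r + s/6, 1 - r + s/6) = (r - s/2, 1) ∧
    F11 (r - s/2, 1) = (0, r - s/2) := by
  have hr : 3*s/2 ≤ r := by linarith
  refine ⟨zero_sub_half_mem_D2 hs.le, diag_mem_D8 hr hhi, sub_half_one_mem_D11 hs.le hr,
    F2_zero_sub_half r s, ?_, F11_snd_one _⟩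
  rw [F8_diag]
  congr 1
  ring

theorem period3_orbit_2_8_11 (r s : ℝ)
    (hs : 0 < s) (hrs : 2*s < r) (h1 : r + 5*s/3 < 1) (hhi : r ≤ 1/2 + s/12) :
    ((0 : ℝ), r - s/2) ∈ D2 r s ∧
    (1 - r + s/6, 1 - r + s/6) ∈ D8 r s ∧
    (r - s/2, (1 : ℝ)) ∈ D11 r s ∧
    F2 r s (0, r - s/2) = (1 - r + s/6, 1 - r + s/6) ∧
    F8 s (1 - r + s/6, 1 - r + s/6) = (r - s/2, 1) ∧
    F11 (r - s/2, 1) = (0, r - s/2) :=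
  period3_orbit_2_8_11_general r s hs hrs hhi
end
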